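/- arXiv:1906.01305 — 3 statements merged into one kernel-verified Lean document; each statement's English description precedes it below -/
import Mathlib

section
/- (Lemma 2.) Let λ_1,…,λ_N be pairwise distinct real numbers, let μ_1,…,μ_{N−1} be real numbers, and let p ∈ ℝ^N satisfy the polynomial identity Σ_{l=1}^{N} p_l² · ∏_{j=1, j≠l}^{N} (λ − λ_j) = ∏_{k=1}^{N−1} (λ − μ_k) for all λ ∈ ℝ. Then: (i) ⟨Λp,p⟩ = Σ_{j=1}^{N} λ_j − Σ_{j=1}^{N−1} μ_j; (ii) ⟨Λ²p,p⟩ = Σ_{i<j} μ_iμ_j − Σ_{i<j} λ_iλ_j + (Σ_{j=1}^{N} λ_j)² − (Σ_{j=1}^{N} λ_j)(Σ_{j=1}^{N−1} μ_j); (iii) ⟨Λ³p,p⟩ = Σ_{i<j<k} λ_iλ_jλ_k − Σ_{i<j<k} μ_iμ_jμ_k − 2(Σ_{j=1}^{N} λ_j)(Σ_{i<j} λ_iλ_j) + (Σ_{j=1}^{N} λ_j)(Σ_{i<j} μ_iμ_j) + (Σ_{i<j} λ_iλ_j − (Σ_{j=1}^{N} λ_j)²)(Σ_{j=1}^{N−1}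 μ_j) + (Σ_{j=1}^{N} λ_j)³. -/
open Finset Polynomial

lemma esymm_big_zero (s : Multiset ℝ) (k : ℕ) (h : Multiset.card s < k) : s.esymm k = 0 := by
  simp [Multiset.esymm, Multiset.powersetCard_eq_empty k h]

lemma esymm_zero_eq (s : Multiset ℝ) : s.esymm 0 = 1 := by simp [Multiset.esymm]

lemma coeff_key (n j k : ℕ) (hk : k ≤ n + j) (g : Fin n → ℝ) :
    (X ^ j * ∏ i, (X - C (g i))).coeff (n + j - k)
      = (-1) ^ k * (Multiset.esymm ((univ : Finset (Fin n)).val.map g) k) := by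
  have hprod : (∏ i, (X - C (g i))) =
      (Multiset.map (fun t => X - C t) ((univ : Finset (Fin n)).val.map g)).prod := by
    rw [Multiset.map_map]; rfl
  have hcard : Multiset.card ((univ : Finset (Fin n)).val.map g) = n := by simp
  rcases le_or_gt k n with hkn | hkn
  · have hdeg : n + j - k = (n - k) + j := by omega
    rw [hdeg, coeff_X_pow_mul, hprod, Multiset.prod_X_sub_C_coeff _ (by omega : n - k ≤ _)]
    rw [hcard]
    congr 2 <;> omega
  · rw [X_pow_mul, coeff_mul_X_pow', if_neg (by omega)]
    rw [esymm_big_zero _ _ (by omega), mul_zero]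

lemma esymm_one_eq (n : ℕ) (g : Fin n → ℝ) :
    Multiset.esymm ((univ : Finset (Fin n)).val.map g) 1 = ∑ i, g i := by
  rw [Finset.esymm_map_val, Finset.powersetCard_one, Finset.sum_map]
  simp

lemma esymm_two_eq (n : ℕ) (g : Fin n → ℝ) :
    Multiset.esymm ((univ : Finset (Fin n)).val.map g) 2 =
      ∑ x ∈ (Finset.univ : Finset (Fin n × Fin n)).filter (fun x => x.1 < x.2),
        g x.1 * g x.2 := by
  rw [Finset.esymm_map_val]
  refine (Finset.sum_bij (fun x _ => ({x.1, x.2} : Finset (Fin n))) ?_ ?_ ?_ ?_).symm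
  · intro x hx
    simp only [mem_filter] at hx
    exact mem_powersetCard_univ.mpr (card_pair (ne_of_lt hx.2))
  · intro x hx y hy hxy
    simp only [mem_filter, mem_univ, true_and] at hx hy
    have h := fun v => Finset.ext_iff.mp hxy v
    simp only [mem_insert, mem_singleton] at h
    have e1 : x.1 = y.1 ∨ x.1 = y.2 := (h x.1).mp (Or.inl rfl)
    have e2 : x.2 = y.1 ∨ x.2 = y.2 := (h x.2).mp (Or.inr rfl)
    have e3 : y.1 = x.1 ∨ y.1 = x.2 := (h y.1).mpr (Or.inl rfl)
    have e4 : y.2 = x.1 ∨ y.2 = x.2 := (h y.2).mpr (Or.inr rfl)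
    have : x.1 = y.1 ∧ x.2 = y.2 := by
      simp only [Fin.ext_iff, Fin.lt_def] at e1 e2 e3 e4 hx hy ⊢
      omega
    exact Prod.ext this.1 this.2
  · intro t ht
    rw [mem_powersetCard_univ, card_eq_two] at ht
    obtain ⟨a, b, hab, rfl⟩ := ht
    rcases lt_or_gt_of_ne hab with h | h
    · exact ⟨(a, b), by simp [h], rfl⟩
    · exact ⟨(b, a), by simp [h], by rw [Finset.pair_comm]⟩
  · intro x hx
    simp only [mem_filter, mem_univ, true_and] at hx
    exact (Finset.prod_pair (ne_of_lt hx)).symm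

lemma esymm_three_eq (n : ℕ) (g : Fin n → ℝ) :
    Multiset.esymm ((univ : Finset (Fin n)).val.map g) 3 =
      ∑ x ∈ (Finset.univ : Finset (Fin n × Fin n × Fin n)).filter
          (fun x => x.1 < x.2.1 ∧ x.2.1 < x.2.2),
        g x.1 * g x.2.1 * g x.2.2 := by
  have hnotmem : ∀ x y z : Fin n, x < y → y < z → x ∉ ({y, z} : Finset (Fin n)) := by
    intro x y z h1 h2 hm
    rcases mem_insert.mp hm with h | h
    · exact ne_of_lt h1 h
    · exact ne_of_lt (h1.trans h2) (mem_singleton.mp h)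
  rw [Finset.esymm_map_val]
  refine (Finset.sum_bij (fun x _ => ({x.1, x.2.1, x.2.2} : Finset (Fin n))) ?_ ?_ ?_ ?_).symm
  · intro x hx
    simp only [mem_filter, mem_univ, true_and] at hx
    obtain ⟨h12, h23⟩ := hx
    rw [mem_powersetCard_univ,
      card_insert_of_notMem (hnotmem _ _ _ h12 h23), card_pair (ne_of_lt h23)]
  · intro x hx y hy hxy
    simp only [mem_filter, mem_univ, true_and] at hx hy
    have h := fun v => Finset.ext_iff.mp hxy v
    simp only [mem_insert, mem_singleton] at h
    have e1 := (h x.1).mp (Or.inl rfl)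
    have e2 := (h x.2.1).mp (Or.inr (Or.inl rfl))
    have e3 := (h x.2.2).mp (Or.inr (Or.inr rfl))
    have e4 := (h y.1).mpr (Or.inl rfl)
    have e5 := (h y.2.1).mpr (Or.inr (Or.inl rfl))
    have e6 := (h y.2.2).mpr (Or.inr (Or.inr rfl))
    obtain ⟨ha, hb⟩ := hx; obtain ⟨hc, hd⟩ := hy
    have : x.1 = y.1 ∧ x.2.1 = y.2.1 ∧ x.2.2 = y.2.2 := by
      simp only [Fin.ext_iff, Fin.lt_def] at e1 e2 e3 e4 e5 e6 ha hb hc hd ⊢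
      omega
    exact Prod.ext this.1 (Prod.ext this.2.1 this.2.2)
  · intro t ht
    rw [mem_powersetCard_univ, card_eq_three] at ht
    obtain ⟨a, b, c, hab, hac, hbc, rfl⟩ := ht
    have key : ∀ x y z : Fin n, x < y → y < z → ({x, y, z} : Finset (Fin n)) = {a, b, c} →
        ∃ w, ∃ _ : w ∈ (Finset.univ : Finset (Fin n × Fin n × Fin n)).filter
          (fun w => w.1 < w.2.1 ∧ w.2.1 < w.2.2),
          ({w.1, w.2.1, w.2.2} : Finset (Fin n)) = ({a, b, c} : Finset (Fin n)) := by
      intro x y z h1 h2 he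
      exact ⟨(x, y, z), by simp [h1, h2], he⟩
    rcases lt_trichotomy a b with h1 | h1 | h1
    · rcases lt_trichotomy b c with h2 | h2 | h2
      · exact key a b c h1 h2 rfl
      · exact absurd h2 hbc
      · rcases lt_trichotomy a c with h3 | h3 | h3
        · exact key a c b h3 h2 (by ext v; simp; tauto)
        · exact absurd h3 hac
        · exact key c a b h3 h1 (by ext v; simp; tauto)
    · exact absurd h1 hab
    · rcases lt_trichotomy a c with h2 | h2 | h2
      · exact key b a c h1 h2 (by ext v; simp; tauto)
      · exact absurd h2 hac
      · rcases lt_trichotomy b c with h3 | h3 | h3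
        · exact key b c a h3 h2 (by ext v; simp; tauto)
        · exact absurd h3 hbc
        · exact key c b a h3 h1 (by ext v; simp; tauto)
  · intro x hx
    simp only [mem_filter, mem_univ, true_and] at hx
    obtain ⟨h12, h23⟩ := hx
    rw [Finset.prod_insert (hnotmem _ _ _ h12 h23),
      Finset.prod_pair (ne_of_lt h23), mul_assoc]

/-- Lemma 2 of the paper. If
`Σ_l p_l² ∏_{j≠l}(λ - λ_j) = ∏_k (λ - μ_k)` for all `λ`, then `⟨Λp,p⟩`, `⟨Λ²p,p⟩`
and `⟨Λ³p,p⟩` are given by the stated symmetric functions of the `λ`'s and `μ`'s. -/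
theorem trace_formulas_elliptic_variables
    (N : ℕ) (hN : 2 ≤ N) (lam : Fin N → ℝ)
    (hdist : Function.Injective lam)
    (mu : Fin (N - 1) → ℝ) (p : Fin N → ℝ)
    (hpoly : ∀ t : ℝ,
      ∑ l, (p l) ^ 2 * ∏ j ∈ Finset.univ.erase l, (t - lam j)
        = ∏ k, (t - mu k)) :
    (∑ j, lam j * p j * p j = (∑ j, lam j) - ∑ j, mu j) ∧
    (∑ j, (lam j) ^ 2 * p j * p j
      = (∑ x ∈ (Finset.univ : Finset (Fin (N - 1) × Fin (N - 1))).filter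
            (fun x => x.1 < x.2), mu x.1 * mu x.2)
        - (∑ x ∈ (Finset.univ : Finset (Fin N × Fin N)).filter
            (fun x => x.1 < x.2), lam x.1 * lam x.2)
        + (∑ j, lam j) ^ 2 - (∑ j, lam j) * ∑ j, mu j) ∧
    (∑ j, (lam j) ^ 3 * p j * p j
      = (∑ x ∈ (Finset.univ : Finset (Fin N × Fin N × Fin N)).filter
            (fun x => x.1 < x.2.1 ∧ x.2.1 < x.2.2), lam x.1 * lam x.2.1 * lam x.2.2)
        - (∑ x ∈ (Finset.univ : Finset (Fin (N - 1) × Fin (N - 1) × Fin (N - 1))).filter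
            (fun x => x.1 < x.2.1 ∧ x.2.1 < x.2.2), mu x.1 * mu x.2.1 * mu x.2.2)
        - 2 * (∑ j, lam j) * (∑ x ∈ (Finset.univ : Finset (Fin N × Fin N)).filter
            (fun x => x.1 < x.2), lam x.1 * lam x.2)
        + (∑ j, lam j) * (∑ x ∈ (Finset.univ : Finset (Fin (N - 1) × Fin (N - 1))).filter
            (fun x => x.1 < x.2), mu x.1 * mu x.2)
        + ((∑ x ∈ (Finset.univ : Finset (Fin N × Fin N)).filter
              (fun x => x.1 < x.2), lam x.1 * lam x.2)
            - (∑ j, lam j) ^ 2) * (∑ j, mu j)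
        + (∑ j, lam j) ^ 3) := by
  set W : Polynomial ℝ := ∏ j, (X - C (lam j)) with hWdef
  set Q : Polynomial ℝ := ∏ k, (X - C (mu k)) with hQdef
  have h0 : ∑ l, C ((p l) ^ 2) * ∏ j ∈ Finset.univ.erase l, (X - C (lam j)) = Q := by
    apply Polynomial.funext
    intro t
    simp only [hQdef, eval_finset_sum, eval_mul, eval_C, eval_prod, eval_sub, eval_X]
    exact hpoly t
  have hWl_coeff : ∀ l : Fin N,
      (∏ j ∈ Finset.univ.erase l, (X - C (lam j))).coeff (N - 1) = 1 := by
    intro l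
    have hm : (∏ j ∈ Finset.univ.erase l, (X - C (lam j))).Monic :=
      monic_prod_of_monic _ _ (fun j _ => monic_X_sub_C _)
    have hd : (∏ j ∈ Finset.univ.erase l, (X - C (lam j))).natDegree = N - 1 := by
      rw [natDegree_prod_of_monic _ _ (fun j _ => monic_X_sub_C _)]
      simp [Finset.card_erase_of_mem]
    rw [← hd]
    exact hm.coeff_natDegree
  have hsum_coeff : ∀ c : Fin N → ℝ,
      (∑ l, C (c l) * ∏ j ∈ Finset.univ.erase l, (X - C (lam j))).coeff (N - 1)
        = ∑ l, c l := by
    intro c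
    rw [finset_sum_coeff]
    exact Finset.sum_congr rfl fun l _ => by rw [coeff_C_mul, hWl_coeff, mul_one]
  have step : ∀ c : Fin N → ℝ,
      X * (∑ l, C (c l) * ∏ j ∈ Finset.univ.erase l, (X - C (lam j)))
        = C (∑ l, c l) * W
          + ∑ l, C (c l * lam l) * ∏ j ∈ Finset.univ.erase l, (X - C (lam j)) := by
    intro c
    rw [Finset.mul_sum, map_sum, Finset.sum_mul, ← Finset.sum_add_distrib]
    refine Finset.sum_congr rfl fun l _ => ?_
    have h1 : (X - C (lam l)) * ∏ j ∈ Finset.univ.erase l, (X - C (lam j)) = W := by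
      rw [hWdef]
      exact Finset.mul_prod_erase univ (fun j => X - C (lam j)) (mem_univ l)
    rw [C_mul, ← h1]; ring
  -- coefficient values
  have cQ0 : Q.coeff (N - 1) = 1 := by
    have h := coeff_key (N - 1) 0 0 (by omega) mu
    rw [esymm_zero_eq] at h
    simpa [hQdef] using h
  have cQ1 : (X ^ 1 * Q).coeff (N - 1) = -(∑ j, mu j) := by
    have h := coeff_key (N - 1) 1 1 (by omega) mu
    rw [esymm_one_eq] at h
    simpa [hQdef] using h
  have cQ2 : (X ^ 2 * Q).coeff (N - 1)
      = ∑ x ∈ (Finset.univ : Finset (Fin (N - 1) × Fin (N - 1))).filter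
          (fun x => x.1 < x.2), mu x.1 * mu x.2 := by
    have h := coeff_key (N - 1) 2 2 (by omega) mu
    rw [esymm_two_eq] at h
    simpa [hQdef] using h
  have cQ3 : (X ^ 3 * Q).coeff (N - 1)
      = -(∑ x ∈ (Finset.univ : Finset (Fin (N - 1) × Fin (N - 1) × Fin (N - 1))).filter
          (fun x => x.1 < x.2.1 ∧ x.2.1 < x.2.2), mu x.1 * mu x.2.1 * mu x.2.2) := by
    have h := coeff_key (N - 1) 3 3 (by omega) mu
    rw [esymm_three_eq] at h
    have h3 : ((-1 : ℝ)) ^ 3 = -1 := by norm_num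
    rw [h3, neg_one_mul] at h
    simpa [hQdef] using h
  have cW0 : W.coeff (N - 1) = -(∑ j, lam j) := by
    have h := coeff_key N 0 1 (by omega) lam
    rw [esymm_one_eq] at h
    simpa [hWdef] using h
  have cW1 : (X ^ 1 * W).coeff (N - 1)
      = ∑ x ∈ (Finset.univ : Finset (Fin N × Fin N)).filter
          (fun x => x.1 < x.2), lam x.1 * lam x.2 := by
    have h := coeff_key N 1 2 (by omega) lam
    rw [esymm_two_eq] at h
    have hd : N + 1 - 2 = N - 1 := by omega
    rw [hd] at h
    simpa [hWdef] using h
  have cW2 : (X ^ 2 * W).coeff (N - 1)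
      = -(∑ x ∈ (Finset.univ : Finset (Fin N × Fin N × Fin N)).filter
          (fun x => x.1 < x.2.1 ∧ x.2.1 < x.2.2), lam x.1 * lam x.2.1 * lam x.2.2) := by
    have h := coeff_key N 2 3 (by omega) lam
    rw [esymm_three_eq] at h
    have hd : N + 2 - 3 = N - 1 := by omega
    have h3 : ((-1 : ℝ)) ^ 3 = -1 := by norm_num
    rw [hd, h3, neg_one_mul] at h
    simpa [hWdef] using h
  -- the chain of polynomial identities
  have ha0 : ∑ l, (p l) ^ 2 = 1 := by
    have h := hsum_coeff (fun l => (p l) ^ 2)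
    rw [h0, cQ0] at h
    exact h.symm
  have hL1 : ∑ l, C ((p l) ^ 2 * lam l) * ∏ j ∈ Finset.univ.erase l, (X - C (lam j))
      = X ^ 1 * Q - C (∑ l, (p l) ^ 2) * W := by
    have h := step (fun l => (p l) ^ 2)
    rw [h0] at h
    linear_combination -h
  have ha1 : ∑ l, (p l) ^ 2 * lam l = (∑ j, lam j) - ∑ j, mu j := by
    have h := hsum_coeff (fun l => (p l) ^ 2 * lam l)
    rw [hL1, coeff_sub, coeff_C_mul, cQ1, cW0, ha0] at h
    linarith
  have hL2 : ∑ l, C ((p l) ^ 2 * lam l * lam l) * ∏ j ∈ Finset.univ.erase l, (X - C (lam j))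
      = X ^ 2 * Q - C (∑ l, (p l) ^ 2) * (X ^ 1 * W)
        - C (∑ l, (p l) ^ 2 * lam l) * W := by
    have h := step (fun l => (p l) ^ 2 * lam l)
    rw [hL1] at h
    linear_combination -h
  have ha2 : ∑ l, (p l) ^ 2 * lam l * lam l
      = (∑ x ∈ (Finset.univ : Finset (Fin (N - 1) × Fin (N - 1))).filter
          (fun x => x.1 < x.2), mu x.1 * mu x.2)
        - (∑ x ∈ (Finset.univ : Finset (Fin N × Fin N)).filter
          (fun x => x.1 < x.2), lam x.1 * lam x.2)
        + ((∑ j, lam j) - ∑ j, mu j) * (∑ j, lam j) := by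
    have h := hsum_coeff (fun l => (p l) ^ 2 * lam l * lam l)
    rw [hL2, coeff_sub, coeff_sub, coeff_C_mul, coeff_C_mul, cQ2, cW1, cW0, ha0, ha1] at h
    linarith
  have hL3 : ∑ l, C ((p l) ^ 2 * lam l * lam l * lam l)
        * ∏ j ∈ Finset.univ.erase l, (X - C (lam j))
      = X ^ 3 * Q - C (∑ l, (p l) ^ 2) * (X ^ 2 * W)
        - C (∑ l, (p l) ^ 2 * lam l) * (X ^ 1 * W)
        - C (∑ l, (p l) ^ 2 * lam l * lam l) * W := by
    have h := step (fun l => (p l) ^ 2 * lam l * lam l)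
    rw [hL2] at h
    linear_combination -h
  have ha3 : ∑ l, (p l) ^ 2 * lam l * lam l * lam l
      = (∑ x ∈ (Finset.univ : Finset (Fin N × Fin N × Fin N)).filter
          (fun x => x.1 < x.2.1 ∧ x.2.1 < x.2.2), lam x.1 * lam x.2.1 * lam x.2.2)
        - (∑ x ∈ (Finset.univ : Finset (Fin (N - 1) × Fin (N - 1) × Fin (N - 1))).filter
          (fun x => x.1 < x.2.1 ∧ x.2.1 < x.2.2), mu x.1 * mu x.2.1 * mu x.2.2)
        - ((∑ j, lam j) - ∑ j, mu j)
            * (∑ x ∈ (Finset.univ : Finset (Fin N × Fin N)).filter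
              (fun x => x.1 < x.2), lam x.1 * lam x.2)
        + ((∑ x ∈ (Finset.univ : Finset (Fin (N - 1) × Fin (N - 1))).filter
            (fun x => x.1 < x.2), mu x.1 * mu x.2)
          - (∑ x ∈ (Finset.univ : Finset (Fin N × Fin N)).filter
            (fun x => x.1 < x.2), lam x.1 * lam x.2)
          + ((∑ j, lam j) - ∑ j, mu j) * (∑ j, lam j)) * (∑ j, lam j) := by
    have h := hsum_coeff (fun l => (p l) ^ 2 * lam l * lam l * lam l)
    rw [hL3, coeff_sub, coeff_sub, coeff_sub, coeff_C_mul, coeff_C_mul, coeff_C_mul,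
      cQ3, cW2, cW1, cW0, ha0, ha1, ha2] at h
    linarith
  refine ⟨?_, ?_, ?_⟩
  · have e1 : ∑ j, lam j * p j * p j = ∑ l, (p l) ^ 2 * lam l :=
      Finset.sum_congr rfl fun j _ => by ring
    rw [e1, ha1]
  · have e2 : ∑ j, (lam j) ^ 2 * p j * p j = ∑ l, (p l) ^ 2 * lam l * lam l :=
      Finset.sum_congr rfl fun j _ => by ring
    rw [e2, ha2]; ring
  · have e3 : ∑ j, (lam j) ^ 3 * p j * p j = ∑ l, (p l) ^ 2 * lam l * lam l * lam l :=
      Finset.sum_congr rfl fun j _ => by ring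
    rw [e3, ha3]; ring
end

section
/- (Theorem 2, concrete form.) Let a_{−0} = 1 and a_{−j} = (−1)^j Σ_{i_1<…<i_j} λ_{i_1}^{−1}⋯λ_{i_j}^{−1} for 1 ≤ j ≤ N. Then for every p ∈ ℝ^N one has the identity Σ_{k=1}^{N} a_{−(N−k)} ⟨Λ^{−k}p,p⟩ = −a_{−N} ⟨p,p⟩. Consequently, if p, q : ℝ → ℝ^N solve the Neumann system p_x = q, q_x = −Λp + (⟨Λp,p⟩ − ⟨q,q⟩)p with ⟨p(x),p(x)⟩ = 1 for all x, then the function x ↦ ⟨Λ^{−N}p,p⟩ + a_{−1}⟨Λ^{−N+1}p,p⟩ + … + a_{−N+1}⟨Λ^{−1}p,p⟩ is constant, equal to −a_{−N}; this expresses that the Neumann map produces a finite-gap potential of the negative-order Novikov equation. -/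
open Finset Polynomial

/-- The coefficients `a_{-j} = (-1)^j Σ_{i_1<⋯<i_j} λ_{i_1}^{-1}⋯λ_{i_j}^{-1}`
(elementary symmetric functions of the `λ_i⁻¹`, with sign). -/
noncomputable def aneg {N : ℕ} (lam : Fin N → ℝ) (j : ℕ) : ℝ :=
  (-1 : ℝ) ^ j * ∑ s ∈ Finset.powersetCard j (Finset.univ : Finset (Fin N)),
    ∏ i ∈ s, (lam i)⁻¹

lemma aneg_eq_coeff {N : ℕ} (lam : Fin N → ℝ) {k : ℕ} (hk : k ≤ N) :
    aneg lam (N - k) = (∏ j : Fin N, (X - C (lam j)⁻¹)).coeff k := by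
  have h : (∏ j : Fin N, (X - C (lam j)⁻¹)) =
      (((Finset.univ : Finset (Fin N)).val.map (fun j => (lam j)⁻¹)).map
        (fun t => X - C t)).prod := by
    rw [Multiset.map_map]; rfl
  rw [h, Multiset.prod_X_sub_C_coeff _ (by simpa using hk)]
  simp only [Multiset.card_map, Finset.card_val, Finset.card_univ, Fintype.card_fin]
  rw [Finset.esymm_map_val, aneg]

lemma key {N : ℕ} (lam : Fin N → ℝ) (i : Fin N) :
    ∑ k ∈ Finset.Icc 1 N, aneg lam (N - k) * ((lam i)⁻¹) ^ k = - aneg lam N := by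
  set P : ℝ[X] := ∏ j : Fin N, (X - C (lam j)⁻¹) with hP
  have hdeg : P.natDegree < N + 1 := by
    have : P = (((Finset.univ : Finset (Fin N)).val.map (fun j => (lam j)⁻¹)).map
        (fun t => X - C t)).prod := by rw [hP, Multiset.map_map]; rfl
    rw [this, natDegree_multiset_prod_X_sub_C_eq_card]
    simp
  have heval : P.eval ((lam i)⁻¹) = 0 := by
    rw [hP, eval_prod]
    exact Finset.prod_eq_zero (Finset.mem_univ i) (by simp)
  rw [Polynomial.eval_eq_sum_range' hdeg] at heval
  have hsplit : Finset.range (N + 1) = insert 0 (Finset.Icc 1 N) := by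
    ext m; simp [Nat.lt_succ_iff, Nat.one_le_iff_ne_zero]; omega
  rw [hsplit, Finset.sum_insert (by simp)] at heval
  have h0 : P.coeff 0 * (lam i)⁻¹ ^ 0 = aneg lam N := by
    rw [← aneg_eq_coeff lam (Nat.zero_le N)]; simp
  have hcongr : ∀ k ∈ Finset.Icc 1 N,
      P.coeff k * (lam i)⁻¹ ^ k = aneg lam (N - k) * ((lam i)⁻¹) ^ k := by
    intro k hk
    rw [aneg_eq_coeff lam (Finset.mem_Icc.mp hk).2]
  rw [Finset.sum_congr rfl hcongr, h0] at heval
  linarith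

/-- Theorem 2 of the paper, concrete form. One has the identity
`Σ_{k=1}^{N} a_{-(N-k)} ⟨Λ^{-k}p,p⟩ = -a_{-N} ⟨p,p⟩` for every `p`; consequently,
along every solution of the Neumann system on the unit sphere the quantity
`⟨Λ^{-N}p,p⟩ + a_{-1}⟨Λ^{-N+1}p,p⟩ + ⋯ + a_{-N+1}⟨Λ^{-1}p,p⟩` is constant,
equal to `-a_{-N}`. -/
theorem negative_order_novikov
    (N : ℕ) (hN : 2 ≤ N) (lam : Fin N → ℝ)
    (hdist : Function.Injective lam) (hnz : ∀ i, lam i ≠ 0) :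
    (∀ p : Fin N → ℝ,
      ∑ k ∈ Finset.Icc 1 N, aneg lam (N - k) * (∑ i, ((lam i)⁻¹) ^ k * p i * p i)
        = - aneg lam N * ∑ i, p i * p i) ∧
    (∀ p q : ℝ → Fin N → ℝ,
      (∀ i, ContDiff ℝ (⊤ : ℕ∞) (fun x => p x i)) →
      (∀ i, ContDiff ℝ (⊤ : ℕ∞) (fun x => q x i)) →
      (∀ x i, deriv (fun y => p y i) x = q x i) →
      (∀ x i, deriv (fun y => q y i) x
        = - lam i * p x i
          + ((∑ j, lam j * p x j * p x j) - (∑ j, q x j * q x j)) * p x i) →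
      (∀ x, ∑ i, p x i * p x i = 1) →
      ∀ x : ℝ,
        ∑ k ∈ Finset.Icc 1 N, aneg lam (N - k) * (∑ i, ((lam i)⁻¹) ^ k * p x i * p x i)
          = - aneg lam N) := by
  have main : ∀ p : Fin N → ℝ,
      ∑ k ∈ Finset.Icc 1 N, aneg lam (N - k) * (∑ i, ((lam i)⁻¹) ^ k * p i * p i)
        = - aneg lam N * ∑ i, p i * p i := by
    intro p
    have : ∀ k ∈ Finset.Icc 1 N,
        aneg lam (N - k) * (∑ i, ((lam i)⁻¹) ^ k * p i * p i)
          = ∑ i, (aneg lam (N - k) * ((lam i)⁻¹) ^ k) * (p i * p i) := by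
      intro k _; rw [Finset.mul_sum]; apply Finset.sum_congr rfl; intros; ring
    rw [Finset.sum_congr rfl this, Finset.sum_comm]
    rw [Finset.mul_sum]
    apply Finset.sum_congr rfl
    intro i _
    rw [← Finset.sum_mul, key lam i]
  exact ⟨main, fun p q _ _ _ _ hsphere x => by rw [main (p x), hsphere x, mul_one]⟩
end

section
/- (Proposition 1, functional independence.) For 0 ≤ k ≤ N−2 define F_{−k} : ℝ^N × ℝ^N → ℝ by F_{−k}(p,q) = ⟨Λ^{−k−1}p,p⟩ − Σ_{i=0}^{k} (⟨Λ^{−i−1}p,p⟩⟨Λ^{−k+i−1}q,q⟩ − ⟨Λ^{−i−1}p,q⟩⟨Λ^{−k+i−1}p,q⟩). Suppose γ_0, γ_1, …, γ_{N−2} ∈ ℝ are such that for every (p,q) with ⟨p,p⟩ = 1, ⟨p,q⟩ = 0 and every tangent vector (ξ,η) ∈ ℝ^N × ℝ^N satisfying ⟨p,ξ⟩ = 0 and ⟨ξ,q⟩ + ⟨p,η⟩ = 0, the directional derivative Σ_{k=0}^{N−2} γ_k · D F_{−k}(p,q)[(ξ,η)] vanishes. Then γ_0 = γ_1 = … = γ_{N−2}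 = 0; i.e., the differentials dF_{−0},…,dF_{−N+2} restricted to the tangent bundle of the unit sphere TS^{N−1} = {(p,q) : ⟨p,p⟩ = 1, ⟨p,q⟩ = 0} satisfy no nontrivial constant-coefficient linear relation. -/
open Finset

/-- The backward integral of motion `F_{-k}`. -/
noncomputable def Fneg {N : ℕ} (lam : Fin N → ℝ) (k : ℕ)
    (x : (Fin N → ℝ) × (Fin N → ℝ)) : ℝ :=
  (∑ j, ((lam j)⁻¹) ^ (k + 1) * x.1 j * x.1 j)
  - ∑ i ∈ Finset.range (k + 1),
      ((∑ j, ((lam j)⁻¹) ^ (i + 1) * x.1 j * x.1 j)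
          * (∑ j, ((lam j)⁻¹) ^ (k - i + 1) * x.2 j * x.2 j)
       - (∑ j, ((lam j)⁻¹) ^ (i + 1) * x.1 j * x.2 j)
          * (∑ j, ((lam j)⁻¹) ^ (k - i + 1) * x.1 j * x.2 j))

open ContinuousLinearMap Polynomial

noncomputable def PP1 {N : ℕ} (j : Fin N) : ((Fin N → ℝ) × (Fin N → ℝ)) →L[ℝ] ℝ :=
  (ContinuousLinearMap.proj j).comp (ContinuousLinearMap.fst ℝ (Fin N → ℝ) (Fin N → ℝ))

noncomputable def PP2 {N : ℕ} (j : Fin N) : ((Fin N → ℝ) × (Fin N → ℝ)) →L[ℝ] ℝ :=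
  (ContinuousLinearMap.proj j).comp (ContinuousLinearMap.snd ℝ (Fin N → ℝ) (Fin N → ℝ))

@[simp] lemma PP1_apply {N : ℕ} (j : Fin N) (x : (Fin N → ℝ) × (Fin N → ℝ)) :
    PP1 j x = x.1 j := rfl

@[simp] lemma PP2_apply {N : ℕ} (j : Fin N) (x : (Fin N → ℝ) × (Fin N → ℝ)) :
    PP2 j x = x.2 j := rfl

lemma hP1 {N : ℕ} (j : Fin N) (x : (Fin N → ℝ) × (Fin N → ℝ)) :
    HasFDerivAt (fun x : (Fin N → ℝ) × (Fin N → ℝ) => x.1 j) (PP1 j) x :=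
  (PP1 j).hasFDerivAt

lemma hP2 {N : ℕ} (j : Fin N) (x : (Fin N → ℝ) × (Fin N → ℝ)) :
    HasFDerivAt (fun x : (Fin N → ℝ) × (Fin N → ℝ) => x.2 j) (PP2 j) x :=
  (PP2 j).hasFDerivAt

lemma fderiv_Fneg_apply {N : ℕ} (lam : Fin N → ℝ) (k : ℕ) (p ξ η : Fin N → ℝ) :
    fderiv ℝ (Fneg lam k) (p, (0 : Fin N → ℝ)) (ξ, η)
      = ∑ j, 2 * ((lam j)⁻¹) ^ (k + 1) * p j * ξ j := by
  classical
  set x₀ : (Fin N → ℝ) × (Fin N → ℝ) := (p, 0) with hx₀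
  set c : ℕ → Fin N → ℝ := fun m j => ((lam j)⁻¹) ^ (m + 1) with hc
  -- derivative CLMs for the building blocks
  have hS1 : ∀ m : ℕ, HasFDerivAt
      (fun x : (Fin N → ℝ) × (Fin N → ℝ) => ∑ j, c m j * x.1 j * x.1 j)
      (∑ j, ((c m j * p j) • PP1 j + p j • (c m j • PP1 j))) x₀ := by
    intro m
    exact HasFDerivAt.fun_sum fun j _ => ((hP1 j x₀).const_mul (c m j)).mul (hP1 j x₀)
  have hS2 : ∀ m : ℕ, HasFDerivAt
      (fun x : (Fin N → ℝ) × (Fin N → ℝ) => ∑ j, c m j * x.2 j * x.2 j)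
      (∑ j, ((c m j * (0:ℝ)) • PP2 j + (0:ℝ) • (c m j • PP2 j))) x₀ := by
    intro m
    exact HasFDerivAt.fun_sum fun j _ => ((hP2 j x₀).const_mul (c m j)).mul (hP2 j x₀)
  have hS12 : ∀ m : ℕ, HasFDerivAt
      (fun x : (Fin N → ℝ) × (Fin N → ℝ) => ∑ j, c m j * x.1 j * x.2 j)
      (∑ j, ((c m j * p j) • PP2 j + (0:ℝ) • (c m j • PP1 j))) x₀ := by
    intro m
    exact HasFDerivAt.fun_sum fun j _ => ((hP1 j x₀).const_mul (c m j)).mul (hP2 j x₀)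
  have H : HasFDerivAt (Fneg lam k)
      ((∑ j, ((c k j * p j) • PP1 j + p j • (c k j • PP1 j)))
        - ∑ i ∈ Finset.range (k + 1),
            (((∑ j, c i j * p j * p j) • (∑ j, ((c (k-i) j * (0:ℝ)) • PP2 j + (0:ℝ) • (c (k-i) j • PP2 j)))
               + (∑ j, c (k-i) j * (0:Fin N → ℝ) j * (0:Fin N → ℝ) j) • (∑ j, ((c i j * p j) • PP1 j + p j • (c i j • PP1 j))))
             - ((∑ j, c i j * p j * (0:Fin N → ℝ) j) • (∑ j, ((c (k-i) j * p j) • PP2 j + (0:ℝ) • (c (k-i) j • PP1 j)))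
               + (∑ j, c (k-i) j * p j * (0:Fin N → ℝ) j) • (∑ j, ((c i j * p j) • PP2 j + (0:ℝ) • (c i j • PP1 j)))))) x₀ := by
    exact (hS1 k).sub (HasFDerivAt.fun_sum fun i _ =>
      (((hS1 i).mul (hS2 (k-i))).sub ((hS12 i).mul (hS12 (k-i)))))
  rw [H.fderiv]
  simp only [ContinuousLinearMap.coe_sub', Pi.sub_apply, ContinuousLinearMap.coe_sum',
    Finset.sum_apply, ContinuousLinearMap.add_apply, ContinuousLinearMap.coe_smul',
    Pi.smul_apply, smul_eq_mul, Pi.zero_apply, mul_zero, zero_mul, zero_smul,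
    ContinuousLinearMap.zero_apply, add_zero, zero_add, Finset.sum_const_zero, smul_zero,
    sub_zero, sub_self, PP1_apply, PP2_apply]
  exact Finset.sum_congr rfl fun j _ => by ring

/-- Proposition 1 of the paper. The differentials of
`F_{-0}, …, F_{-N+2}` restricted to the tangent bundle of the unit sphere
`TS^{N-1} = {(p,q) : ⟨p,p⟩ = 1, ⟨p,q⟩ = 0}` satisfy no nontrivial
constant-coefficient linear relation. -/
theorem backward_integrals_functionally_independent
    (N : ℕ) (hN : 2 ≤ N) (lam : Fin N → ℝ)
    (hdist : Function.Injective lam) (hnz : ∀ i, lam i ≠ 0)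
    (γ : ℕ → ℝ)
    (h : ∀ p q ξ η : Fin N → ℝ,
      (∑ i, p i * p i = 1) → (∑ i, p i * q i = 0) →
      (∑ i, p i * ξ i = 0) → ((∑ i, ξ i * q i) + (∑ i, p i * η i) = 0) →
      ∑ k ∈ Finset.range (N - 1), γ k * fderiv ℝ (Fneg lam k) (p, q) (ξ, η) = 0) :
    ∀ k < N - 1, γ k = 0 := by
  classical
  set μ : Fin N → ℝ := fun a => ∑ k ∈ Finset.range (N - 1), γ k * ((lam a)⁻¹) ^ (k + 1)
    with hμ
  have key : ∀ a b : Fin N, a ≠ b → μ a = μ b := by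
    intro a b hab
    set s : ℝ := (Real.sqrt 2)⁻¹ with hsdef
    have hs : s * s = 2⁻¹ := by
      rw [hsdef, ← mul_inv, Real.mul_self_sqrt (by norm_num)]
    set p : Fin N → ℝ := fun j => if j = a then s else if j = b then s else 0 with hp
    set ξ : Fin N → ℝ := fun j => if j = a then s else if j = b then -s else 0 with hξ
    have hside : ∀ x : Fin N, x ≠ a ∧ x ≠ b → p x * p x = 0 := by
      intro x hx; simp [hp, hx.1, hx.2]
    have hpa : p a = s := by simp [hp]
    have hpb : p b = s := by simp [hp, Ne.symm hab]
    have hξa : ξ a = s := by simp [hξ]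
    have hξb : ξ b = -s := by simp [hξ, Ne.symm hab]
    have hpp : ∑ i, p i * p i = 1 := by
      rw [Fintype.sum_eq_add a b hab hside, hpa, hpb, hs]; norm_num
    have hpξ : ∑ i, p i * ξ i = 0 := by
      rw [Fintype.sum_eq_add a b hab (fun x hx => by simp [hp, hξ, hx.1, hx.2]),
        hpa, hpb, hξa, hξb]
      ring
    have hrel := h p 0 ξ 0 hpp (by simp) hpξ (by simp)
    simp only [fderiv_Fneg_apply] at hrel
    have hterm : ∀ k : ℕ, ∑ j, 2 * ((lam j)⁻¹) ^ (k + 1) * p j * ξ j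
        = ((lam a)⁻¹) ^ (k + 1) - ((lam b)⁻¹) ^ (k + 1) := by
      intro k
      rw [Fintype.sum_eq_add a b hab (fun x hx => by simp [hp, hξ, hx.1, hx.2]),
        hpa, hpb, hξa, hξb]
      linear_combination (2 * ((lam a)⁻¹) ^ (k + 1) - 2 * ((lam b)⁻¹) ^ (k + 1)) * hs
    simp only [hterm, mul_sub] at hrel
    rw [Finset.sum_sub_distrib] at hrel
    rw [hμ]
    dsimp only
    linarith
  have a0 : Fin N := ⟨0, by omega⟩
  have hconst : ∀ a : Fin N, μ a = μ a0 := by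
    intro a
    by_cases hc : a = a0
    · rw [hc]
    · exact key a a0 hc
  set P : ℝ[X] := (∑ k ∈ Finset.range (N - 1), C (γ k) * X ^ (k + 1)) - C (μ a0) with hP
  have heval : ∀ a : Fin N, P.eval ((lam a)⁻¹) = 0 := by
    intro a
    rw [hP]
    simp only [eval_sub, eval_finset_sum, eval_mul, eval_C, eval_pow, eval_X]
    rw [sub_eq_zero]
    exact (hconst a) ▸ rfl
  have hinj : Function.Injective (fun a : Fin N => (lam a)⁻¹) :=
    fun a b hab => hdist (inv_injective hab)
  have hdeg : P.natDegree < N := by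
    have h1 : (∑ k ∈ Finset.range (N - 1), C (γ k) * X ^ (k + 1) : ℝ[X]).natDegree ≤ N - 1 := by
      apply Polynomial.natDegree_sum_le_of_forall_le
      intro k hk
      exact le_trans (Polynomial.natDegree_C_mul_X_pow_le _ _)
        (by have := Finset.mem_range.mp hk; omega)
    have h2 := Polynomial.natDegree_sub_le
      (∑ k ∈ Finset.range (N - 1), C (γ k) * X ^ (k + 1) : ℝ[X]) (C (μ a0))
    rw [← hP] at h2
    have h3 : (C (μ a0) : ℝ[X]).natDegree = 0 := Polynomial.natDegree_C _
    omega
  have hP0 : P = 0 :=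
    Polynomial.eq_zero_of_natDegree_lt_card_of_eval_eq_zero P hinj heval
      (by simpa using hdeg)
  intro k hk
  have hcoeff : P.coeff (k + 1) = γ k := by
    rw [hP]
    simp only [coeff_sub, finset_sum_coeff, coeff_C_mul, coeff_X_pow, coeff_C,
      add_left_inj, mul_ite, mul_one, mul_zero]
    rw [Finset.sum_ite_eq (Finset.range (N - 1)) k (fun m => γ m)]
    simp [Finset.mem_range.mpr hk]
  rw [← hcoeff, hP0, Polynomial.coeff_zero]
end
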